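/- Let E be a real normed vector space, let f : E → ℝ be twice continuously differentiable, let θ̃, ξ_1, …, ξ_T ∈ E, and let β_1, …, β_T ∈ ℝ with ∑_{t=1}^T β_t = 1 and ∑_{t=1}^T β_t ξ_t = 0. Then the function g(ε) = ∑_{t=1}^T β_t f(θ̃ + ε ξ_t) − f(θ̃) satisfies g(ε) = O(ε²) as ε → 0; that is, there exist C > 0 and δ > 0 such that |g(ε)| ≤ C ε² for all |ε| ≤ δ. -/

import Mathlib

/-!
Restrict to the line through `θ̃`: the ensemble `φ ε = ∑ β_t f (θ̃ + ε ξ_t)` is a `C²` function of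
`ε` with `φ 0 = f θ̃` (as `∑ β_t = 1`) and `φ' 0 = Df(θ̃) (∑ β_t ξ_t) = 0`. Its second-order Taylor
polynomial at `0` is therefore `f θ̃ + c ε²`, and Taylor's theorem gives `φ ε - f θ̃ = O(ε²)`.
-/

open Filter Topology Asymptotics Set

theorem Asymptotics.IsBigO.exists_pos_bound_on_closedBall {α F G : Type*} [PseudoMetricSpace α]
    [Norm F] [SeminormedAddCommGroup G] {f : α → F} {g : α → G} {x₀ : α} (h : f =O[𝓝 x₀] g) :
    ∃ C > 0, ∃ δ > 0, ∀ x ∈ Metric.closedBall x₀ δ, ‖f x‖ ≤ C * ‖g x‖ := by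
  obtain ⟨C, hC, hCf⟩ := h.exists_pos
  obtain ⟨δ, hδ, hball⟩ := Metric.eventually_nhds_iff_ball.mp hCf.bound
  exact ⟨C, hC, δ / 2, half_pos hδ, fun x hx =>
    hball x (Metric.closedBall_subset_ball (half_lt_self hδ) hx)⟩

theorem isBigO_sub_sq_of_deriv_eq_zero {F : Type*} [NormedAddCommGroup F] [NormedSpace ℝ F]
    {g : ℝ → F} {x₀ : ℝ} (hg : ContDiff ℝ 2 g) (hd : deriv g x₀ = 0) :
    (fun x => g x - g x₀) =O[𝓝 x₀] fun x => (x - x₀) ^ 2 := by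
  set c : F := (2 : ℝ)⁻¹ • iteratedDeriv 2 g x₀
  have htaylor : taylorWithinEval g 2 univ x₀ = fun x => g x₀ + (x - x₀) ^ 2 • c := by
    ext x
    simp only [c, taylor_within_apply, Finset.sum_range_succ, Finset.sum_range_zero,
      iteratedDerivWithin_univ, iteratedDeriv_zero, iteratedDeriv_one, hd, smul_zero, smul_smul]
    norm_num [mul_comm]
  have hrem := (taylor_isLittleO_univ (n := 2) (x₀ := x₀) hg).isBigO
  rw [htaylor] at hrem
  have hquad : (fun x => (x - x₀) ^ 2 • c) =O[𝓝 x₀] fun x => (x - x₀) ^ 2 :=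
    isBigO_of_le' _ fun x => by rw [norm_smul, mul_comm]
  refine (hrem.add hquad).congr_left fun x => ?_
  simp only [sub_add_eq_sub_sub, sub_add_cancel]

theorem hasDerivAt_sum_mul_comp_add_smul {E ι : Type*} [NormedAddCommGroup E] [NormedSpace ℝ E]
    (s : Finset ι) (β : ι → ℝ) (ξ : ι → E) {f : E → ℝ} {θ : E} (hf : DifferentiableAt ℝ f θ) :
    HasDerivAt (fun ε : ℝ => ∑ t ∈ s, β t * f (θ + ε • ξ t))
      (fderiv ℝ f θ (∑ t ∈ s, β t • ξ t)) 0 := by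
  have hray (t : ι) : HasDerivAt (fun ε : ℝ => f (θ + ε • ξ t)) (fderiv ℝ f θ (ξ t)) 0 := by
    have hline : HasDerivAt (fun ε : ℝ => θ + ε • ξ t) (ξ t) 0 := by
      simpa using ((hasDerivAt_id (0 : ℝ)).smul_const (ξ t)).const_add θ
    exact hf.hasFDerivAt.comp_hasDerivAt_of_eq 0 hline (by simp)
  simpa [map_sum, map_smul] using HasDerivAt.fun_sum fun t _ => (hray t).const_mul (β t)

/-- sufficiency in Proposition 1. For twice continuously
differentiable `f : E → ℝ`, coefficients `β` with `∑ β t = 1` and offsets with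
`∑ β t • ξ t = 0`, the ensembling–merging gap
`g ε = ∑ β t * f (θ̃ + ε • ξ t) - f θ̃` is `O(ε²)` as `ε → 0`: there are
`C > 0` and `δ > 0` with `|g ε| ≤ C * ε²` for all `|ε| ≤ δ`. -/
theorem ensemble_merge_gap_second_order
    {E : Type*} [NormedAddCommGroup E] [NormedSpace ℝ E]
    (f : E → ℝ) (hf : ContDiff ℝ 2 f)
    (T : ℕ) (θmerged : E) (ξ : Fin T → E) (β : Fin T → ℝ)
    (hβ : ∑ t, β t = 1) (hξ : ∑ t, β t • ξ t = 0) :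
    ∃ C > 0, ∃ δ > 0, ∀ ε : ℝ, |ε| ≤ δ →
      |∑ t, β t * f (θmerged + ε • ξ t) - f θmerged| ≤ C * ε ^ 2 := by
  set ensemble : ℝ → ℝ := fun ε => ∑ t, β t * f (θmerged + ε • ξ t)
  have hsmooth : ContDiff ℝ 2 ensemble := by fun_prop
  have hval : ensemble 0 = f θmerged := by simp [ensemble, ← Finset.sum_mul, hβ]
  have hslope : deriv ensemble 0 = 0 := by
    rw [(hasDerivAt_sum_mul_comp_add_smul _ β ξ (hf.differentiable two_ne_zero θmerged)).deriv,
      hξ, map_zero]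
  obtain ⟨C, hC, δ, hδ, hbound⟩ :=
    (isBigO_sub_sq_of_deriv_eq_zero hsmooth hslope).exists_pos_bound_on_closedBall
  refine ⟨C, hC, δ, hδ, fun ε hε => ?_⟩
  simpa [hval, ensemble] using hbound ε (by simpa using hε)
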